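/- Let σ be the logistic sigmoid, σ' its derivative, and let φ(t) = (2π)^{−1/2} e^{−t²/2} be the standard normal density. For every s > 0 and every μ ∈ ℝ: (i) ∫_ℝ σ'(s t + μ) φ(t) dt > 0; and (ii) ∫_ℝ t · σ'(s t + μ) φ(t) dt is strictly negative if μ > 0, equal to 0 if μ = 0, and strictly positive if μ < 0. -/

import Mathlib

open MeasureTheory Real

/-- The logistic sigmoid `σ(x) = 1/(1+e^{−x})`. -/
noncomputable def logistic (x : ℝ) : ℝ := 1 / (1 + Real.exp (-x))

/-- The standard normal density `φ(t) = (2π)^{−1/2} e^{−t²/2}`. -/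
noncomputable def stdNormalPDF (t : ℝ) : ℝ :=
  (Real.sqrt (2 * Real.pi))⁻¹ * Real.exp (-(t ^ 2) / 2)

/-!
`σ'(x) = σ(x) σ(−x) = 1 / (2 (1 + cosh x))` is positive, even and strictly decreasing
in `|x|`, which gives (i) at once. For (ii), the substitution `t ↦ −t` turns the integral into half
the integral of `t φ(t) (σ'(μ + s t) − σ'(μ − s t))`; for `μ > 0` and `t ≠ 0` the argument of larger
modulus is the one with the same sign as `t`, so this integrand is negative away from `t = 0`.
The same substitution shows that the integral is odd in `μ`, which settles `μ = 0` and `μ < 0`.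
-/

section Logistic

lemma logistic_eq_sigmoid : logistic = sigmoid := by
  funext x
  rw [logistic, sigmoid_def, one_div]

lemma deriv_logistic_eq (x : ℝ) : deriv logistic x = (2 * (1 + cosh x))⁻¹ := by
  rw [logistic_eq_sigmoid, congrFun deriv_sigmoid x, ← sigmoid_neg, sigmoid_def, sigmoid_def,
    neg_neg, cosh_eq, ← mul_inv]
  congr 1
  have : exp x * exp (-x) = 1 := by rw [← exp_add, add_neg_cancel, exp_zero]
  linear_combination this

lemma deriv_logistic_pos (x : ℝ) : 0 < deriv logistic x := by
  rw [deriv_logistic_eq]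
  positivity

lemma abs_deriv_logistic_le (x : ℝ) : |deriv logistic x| ≤ 4⁻¹ := by
  rw [abs_of_pos (deriv_logistic_pos x), deriv_logistic_eq]
  gcongr
  linarith [one_le_cosh x]

lemma deriv_logistic_neg (x : ℝ) : deriv logistic (-x) = deriv logistic x := by
  rw [deriv_logistic_eq, deriv_logistic_eq, cosh_neg]

lemma deriv_logistic_lt_of_abs_lt {x y : ℝ} (h : |x| < |y|) :
    deriv logistic y < deriv logistic x := by
  rw [deriv_logistic_eq, deriv_logistic_eq]
  gcongr
  exact cosh_lt_cosh.2 h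

lemma continuous_deriv_logistic : Continuous (deriv logistic) := by
  rw [funext deriv_logistic_eq]
  exact Continuous.inv₀ (by fun_prop) fun x => by positivity

end Logistic

section StdNormal

lemma stdNormalPDF_pos (t : ℝ) : 0 < stdNormalPDF t := by
  unfold stdNormalPDF
  positivity

lemma stdNormalPDF_neg (t : ℝ) : stdNormalPDF (-t) = stdNormalPDF t := by
  rw [stdNormalPDF, stdNormalPDF, neg_sq]

lemma continuous_stdNormalPDF : Continuous stdNormalPDF := by
  unfold stdNormalPDF
  fun_prop

lemma integrable_stdNormalPDF : Integrable stdNormalPDF :=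
  ((integrable_exp_neg_mul_sq (b := 1 / 2) (by norm_num)).const_mul (√(2 * π))⁻¹).congr
    (.of_forall fun t => by unfold stdNormalPDF; ring_nf)

lemma integrable_mul_stdNormalPDF : Integrable fun t => t * stdNormalPDF t :=
  ((integrable_mul_exp_neg_mul_sq (b := 1 / 2) (by norm_num)).const_mul (√(2 * π))⁻¹).congr
    (.of_forall fun t => by unfold stdNormalPDF; ring_nf)

variable {g : ℝ → ℝ} {C : ℝ}

lemma integrable_comp_mul_stdNormalPDF (hg : Continuous g) (hC : ∀ x, |g x| ≤ C) (s μ : ℝ) :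
    Integrable fun t => g (s * t + μ) * stdNormalPDF t :=
  integrable_stdNormalPDF.bdd_mul (f := fun t => g (s * t + μ)) (c := C) (by fun_prop)
    (.of_forall fun t => hC _)

lemma integrable_mul_comp_mul_stdNormalPDF (hg : Continuous g) (hC : ∀ x, |g x| ≤ C)
    (s μ : ℝ) : Integrable fun t => t * g (s * t + μ) * stdNormalPDF t :=
  (integrable_mul_stdNormalPDF.bdd_mul (f := fun t => g (s * t + μ)) (c := C) (by fun_prop)
    (.of_forall fun t => hC _)).congr
    (.of_forall fun t => by ring)

end StdNormal

section Reflection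

variable {f g φ : ℝ → ℝ}

lemma two_mul_integral_eq_integral_add_comp_neg (hf : Integrable f) :
    2 * ∫ t, f t = ∫ t, (f t + f (-t)) := by
  rw [integral_add hf hf.comp_neg, integral_neg_eq_self]
  ring

lemma integral_neg_of_add_comp_neg_neg (hf : Integrable f)
    (h : ∀ t, 0 < t → f t + f (-t) < 0) : ∫ t, f t < 0 := by
  set F : ℝ → ℝ := fun t => -(f t + f (-t))
  have hF_pos : ∀ t, t ≠ 0 → 0 < F t := by
    intro t ht
    rcases ht.lt_or_gt with ht | ht
    · have := h (-t) (neg_pos.2 ht)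
      simp only [F, neg_neg] at this ⊢
      linarith
    · linarith [h t ht]
  have hF_int : 0 < ∫ t, F t := by
    refine (integral_pos_iff_support_of_nonneg_ae ?_ (hf.add hf.comp_neg).neg).2 ?_
    · filter_upwards [Measure.ae_ne volume 0] with t ht using (hF_pos t ht).le
    · calc (0 : ENNReal) < volume (Set.Ioi (0 : ℝ)) := by simp
        _ ≤ volume (Function.support F) :=
          measure_mono fun t ht => (hF_pos t (ne_of_gt ht)).ne'
  rw [integral_neg, ← two_mul_integral_eq_integral_add_comp_neg hf] at hF_int
  linarith

lemma integral_mul_comp_add_neg_eq_neg (hg_even : ∀ x, g (-x) = g x)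
    (hφ_even : ∀ t, φ (-t) = φ t) (s μ : ℝ) :
    ∫ t, t * g (s * t + -μ) * φ t = -∫ t, t * g (s * t + μ) * φ t := by
  rw [← integral_neg_eq_self, ← integral_neg]
  congr 1 with t
  rw [show s * -t + -μ = -(s * t + μ) by ring, hg_even, hφ_even]
  ring

lemma integral_mul_comp_mul_neg (hg_anti : ∀ x y, |x| < |y| → g y < g x)
    (hφ_even : ∀ t, φ (-t) = φ t) (hφ_pos : ∀ t, 0 < φ t) {s μ : ℝ} (hs : 0 < s) (hμ : 0 < μ)
    (hf : Integrable fun t => t * g (s * t + μ) * φ t) :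
    ∫ t, t * g (s * t + μ) * φ t < 0 := by
  refine integral_neg_of_add_comp_neg_neg hf fun t ht => ?_
  have hst : 0 < s * t := mul_pos hs ht
  have hg_lt : g (s * t + μ) < g (s * -t + μ) := by
    refine hg_anti _ _ ?_
    rw [abs_of_pos (by positivity : 0 < s * t + μ), abs_lt]
    constructor <;> linarith
  rw [hφ_even, show -t * g (s * -t + μ) * φ t = -(t * g (s * -t + μ) * φ t) by ring,
    ← sub_eq_add_neg, ← sub_mul, ← mul_sub]
  exact mul_neg_of_neg_of_pos (mul_neg_of_pos_of_neg ht (sub_neg.2 hg_lt)) (hφ_pos t)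

end Reflection

/-- For every `s > 0` and `μ ∈ ℝ`:
(i) `∫_ℝ σ'(s t + μ) φ(t) dt > 0`; and
(ii) `∫_ℝ t · σ'(s t + μ) φ(t) dt` is strictly negative if `μ > 0`, zero if `μ = 0`,
and strictly positive if `μ < 0`, where `σ'` is the derivative of the logistic sigmoid. -/
theorem smoothed_sigmoid_partial_derivative_signs (s μ : ℝ) (hs : 0 < s) :
    (0 < ∫ t : ℝ, deriv logistic (s * t + μ) * stdNormalPDF t) ∧
    (0 < μ → (∫ t : ℝ, t * deriv logistic (s * t + μ) * stdNormalPDF t) < 0) ∧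
    (μ = 0 → (∫ t : ℝ, t * deriv logistic (s * t + μ) * stdNormalPDF t) = 0) ∧
    (μ < 0 → 0 < ∫ t : ℝ, t * deriv logistic (s * t + μ) * stdNormalPDF t) := by
  have hint (ν : ℝ) := integrable_mul_comp_mul_stdNormalPDF continuous_deriv_logistic
    abs_deriv_logistic_le s ν
  have hneg {ν : ℝ} (hν : 0 < ν) :=
    integral_mul_comp_mul_neg (fun _ _ => deriv_logistic_lt_of_abs_lt) stdNormalPDF_neg
      stdNormalPDF_pos hs hν (hint ν)
  have hodd (ν : ℝ) := integral_mul_comp_add_neg_eq_neg deriv_logistic_neg stdNormalPDF_neg s ν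
  refine ⟨?_, hneg, fun hμ => ?_, fun hμ => ?_⟩
  · exact integral_pos_of_integrable_nonneg_nonzero (x := 0)
      ((continuous_deriv_logistic.comp (by fun_prop)).mul continuous_stdNormalPDF)
      (integrable_comp_mul_stdNormalPDF continuous_deriv_logistic abs_deriv_logistic_le s μ)
      (fun t => (mul_pos (deriv_logistic_pos _) (stdNormalPDF_pos t)).le)
      (mul_pos (deriv_logistic_pos _) (stdNormalPDF_pos 0)).ne'
  · subst hμ
    have := hodd 0
    rw [neg_zero] at this
    linarith
  · linarith [hodd μ, hneg (neg_pos.2 hμ)]
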